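/- The self-membership of the co-Russell set is independent in BST: letting α := ∃y∀x(x∈y ↔ x∈x) and σ := ∀y(∀x(x∈y ↔ x∈x) → y∈y), both BST ∪ {α, σ} and BST ∪ {α, ¬σ} are satisfiable. -/

import Mathlib

open FirstOrder FirstOrder.Language

namespace SetParadox

/-- The language with a single binary relation symbol `∈`. -/
def L : Language := ⟨fun _ => Empty, fun n => match n with | 2 => Unit | _ => Empty⟩

/-- The membership relation symbol. -/
def memRel : L.Relations 2 := Unit.unit

/-- `memF t₁ t₂` is the atomic formula `t₁ ∈ t₂`. -/
def memF {n : ℕ} (t₁ t₂ : L.Term (Empty ⊕ Fin n)) : L.BoundedFormula Empty n :=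
  memRel.boundedFormula₂ t₁ t₂

/-- Extensionality: `∀y∀z(∀x(x∈y ↔ x∈z) → y=z)`. -/
def extAx : L.Sentence :=
  ∀' ∀' ((∀' (memF (&2) (&0) ⇔ memF (&2) (&1))) ⟹ ((&0) =' (&1)))

/-- Basic set theory: the theory whose only axiom is extensionality. -/
def BST : L.Theory := {extAx}

/-- The UC-instance `∃y∀x(x∈y ↔ φ(x))` determined by a formula `φ` with one free
variable `x` (so that `y` does not occur free in `φ`). -/
def UCinst (φ : L.BoundedFormula Empty 1) : L.Sentence :=
  ∃' ∀' (memF (&1) (&0) ⇔ φ.liftAt 1 0)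


/-- `α := ∃y∀x(x∈y ↔ x∈x)`: the co-Russell set exists. -/
def coRussellExists : L.Sentence := UCinst (memF (&0) (&0))

/-- `σ := ∀y(∀x(x∈y ↔ x∈x) → y∈y)`: the co-Russell set is a member of itself. -/
def coRussellSelfMem : L.Sentence :=
  ∀' ((∀' (memF (&1) (&0) ⇔ memF (&1) (&1))) ⟹ memF (&0) (&0))

/-! In a one-point universe extensionality holds trivially and the point is its own co-Russell
set, so `σ` holds exactly when the point is a member of itself, which may be decided either way. -/

section Semantics

variable {M : Type*} [L.Structure M]

def Mem (x y : M) : Prop := Structure.RelMap memRel ![x, y]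

@[simp]
theorem realize_memF {n : ℕ} {t₁ t₂ : L.Term (Empty ⊕ Fin n)} {v : Empty → M} {xs : Fin n → M} :
    (memF t₁ t₂).Realize v xs ↔ Mem (t₁.realize (Sum.elim v xs)) (t₂.realize (Sum.elim v xs)) :=
  BoundedFormula.realize_rel₂

theorem realize_extAx_iff : M ⊨ extAx ↔ ∀ y z : M, (∀ x, Mem x y ↔ Mem x z) → y = z := by
  simp [extAx, Sentence.Realize, Formula.Realize, Fin.snoc]

theorem realize_coRussellExists_iff : M ⊨ coRussellExists ↔ ∃ y : M, ∀ x, Mem x y ↔ Mem x x := by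
  simp [coRussellExists, UCinst, Sentence.Realize, Formula.Realize, BoundedFormula.realize_liftAt,
    Fin.snoc]

theorem realize_coRussellSelfMem_iff :
    M ⊨ coRussellSelfMem ↔ ∀ y : M, (∀ x, Mem x y ↔ Mem x x) → Mem y y := by
  simp [coRussellSelfMem, Sentence.Realize, Formula.Realize, Fin.snoc]

end Semantics

def Point (_ : Prop) : Type := Unit

instance {b : Prop} : Unique (Point b) := inferInstanceAs (Unique Unit)

instance (b : Prop) : L.Structure (Point b) where
  funMap {_} f := f.elim
  RelMap {n} _ _ := match n with
    | 2 => b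
    | _ => False

theorem mem_point_iff {b : Prop} (x y : Point b) : Mem x y ↔ b := Iff.rfl

theorem realize_coRussellSelfMem_point_iff (b : Prop) : Point b ⊨ coRussellSelfMem ↔ b := by
  simp [realize_coRussellSelfMem_iff, mem_point_iff]

theorem isSatisfiable_BST_union_coRussellExists_of_point {b : Prop} {φ : L.Sentence}
    (hφ : Point b ⊨ φ) : (BST ∪ {coRussellExists, φ}).IsSatisfiable :=
  have : Point b ⊨ BST ∪ {coRussellExists, φ} := by
    simp only [BST, Theory.model_union_iff, Theory.model_singleton_iff, Theory.model_insert_iff,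
      realize_extAx_iff, realize_coRussellExists_iff]
    exact ⟨fun _ _ _ => Subsingleton.elim _ _, ⟨default, fun _ => Iff.rfl⟩, hφ⟩
  Theory.Model.isSatisfiable (Point b)

theorem coRussell_selfMem_independent :
    (BST ∪ {coRussellExists, coRussellSelfMem}).IsSatisfiable ∧
    (BST ∪ {coRussellExists, ∼coRussellSelfMem}).IsSatisfiable :=
  ⟨isSatisfiable_BST_union_coRussellExists_of_point
      ((realize_coRussellSelfMem_point_iff True).2 trivial),
    isSatisfiable_BST_union_coRussellExists_of_point
      ((Sentence.realize_not _).2 (realize_coRussellSelfMem_point_iff False).1)⟩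

end SetParadox
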